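/- For real numbers x and y, the mixed-type XNOR coincides with multiplication: xnor(x, y) = x·y. -/

import Mathlib

/-- The three-valued logic `M = {T, 0, F}`. -/
inductive Tri where
  | T : Tri
  | Z : Tri
  | F : Tri
deriving DecidableEq

/-- Negation in `M`, with `¬0 = 0`. -/
def Tri.neg : Tri → Tri
  | .T => .F
  | .Z => .Z
  | .F => .T

/-- XNOR in `M`: `0` if either argument is `0`, otherwise the Boolean XNOR. -/
def Tri.xnor : Tri → Tri → Tri
  | .Z, _ => .Z
  | _, .Z => .Z
  | a, b => if a = b then .T else .F

/-- XOR in `M`: `0` if either argument is `0`, otherwise the Boolean XOR. -/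
def Tri.xor : Tri → Tri → Tri
  | .Z, _ => .Z
  | _, .Z => .Z
  | a, b => if a = b then .F else .T

/-- Numeric embedding `e : M → ℝ`. -/
def Tri.e : Tri → ℝ
  | .T => 1
  | .Z => 0
  | .F => -1

/-- Logic projection `p : ℝ → M`. -/
noncomputable def Tri.p (x : ℝ) : Tri :=
  if x > 0 then .T else if x = 0 then .Z else .F

/-- Magnitude of an element of `M`. -/
def Tri.mag : Tri → ℝ
  | .Z => 0
  | _ => 1

/-- Mixed-type application of a logic connective `l` to `a ∈ M` and `x ∈ ℝ`:
the result `c ∈ ℝ` is determined by `|c| = |a|·|x|` and `p c = l a (p x)`. -/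
noncomputable def mixedTR (l : Tri → Tri → Tri) (a : Tri) (x : ℝ) : ℝ :=
  Tri.e (l a (Tri.p x)) * (Tri.mag a * |x|)

/-- Mixed-type application of a logic connective `l` to two reals `x, y`:
the result `c ∈ ℝ` is determined by `|c| = |x|·|y|` and `p c = l (p x) (p y)`. -/
noncomputable def mixedRR (l : Tri → Tri → Tri) (x y : ℝ) : ℝ :=
  Tri.e (l (Tri.p x) (Tri.p y)) * (|x| * |y|)

/- Reading `T, 0, F` as `1, 0, -1` (via `Tri.e`), XNOR becomes multiplication and `p` becomes the
sign function, so the mixed XNOR of `x` and `y` is `sign x * sign y * |x| * |y| = x * y`. -/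

theorem Tri.e_xnor (a b : Tri) : (a.xnor b).e = a.e * b.e := by
  cases a <;> cases b <;> simp [Tri.xnor, Tri.e]

theorem Tri.e_p (x : ℝ) : (Tri.p x).e = SignType.sign x := by
  rcases lt_trichotomy x 0 with hx | rfl | hx
  · simp [Tri.p, Tri.e, hx, hx.not_gt, hx.ne]
  · simp [Tri.p, Tri.e]
  · simp [Tri.p, Tri.e, hx]

theorem mixed_xnor_real_real (x y : ℝ) :
    mixedRR Tri.xnor x y = x * y := by
  calc mixedRR Tri.xnor x y
      = (SignType.sign x * |x|) * (SignType.sign y * |y|) := by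
        rw [mixedRR, Tri.e_xnor, Tri.e_p, Tri.e_p]; ring
    _ = x * y := by rw [sign_mul_abs, sign_mul_abs]
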